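/- Let K be ℝ or ℂ and let M be a finitely generated, integral, separated commutative binoid. Let X = MonoidWithZeroHom M K with the topology of pointwise convergence, and let A ⊆ X be the subspace of homomorphisms p such that p(m) = 0 for every non-unit m ∈ M. Then A is a deformation retract of X: there exists a continuous map F : X × [0,1] → X with F(p,1) = p for all p ∈ X, F(p,0) ∈ A for all p ∈ X, and F(p,0) = p for all p ∈ A. In particular, the inclusion A ↪ X is a homotopy equivalence. -/

import Mathlib

/-!
A positive grading `δ` of `M` (nonnegative weights, additive on nonzero elements, vanishing
exactly on the units) yields the deformation `(p, t) ↦ (m ↦ p m * t ^ δ m)`, which at `t = 0`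
kills every nonunit. Presenting `M` through a finite generating family `g`, such a grading is a
weight vector `w ≥ 0` orthogonal to every relation `a - b` (`∏ gᵃ = ∏ gᵇ ≠ 0`) and positive at
every nonunit generator. By Stiemke's theorem of the alternative it exists unless some rational
combination of relations is `≤ 0` with a negative entry at a nonunit `gᵢ`. Clearing denominators
turns that into `∏ gᵃ = ∏ gᵃ * ∏ gᶜ` with `gᵢ ∣ ∏ gᶜ`; separatedness forces `∏ gᶜ = 1`, so `gᵢ`
would be a unit.
-/

/-- The topology of pointwise convergence on the `K`-spectrum `KSpec(M)`. -/
instance mwzHomTop {M K : Type*} [MulZeroOneClass M] [MulZeroOneClass K]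
    [TopologicalSpace K] : TopologicalSpace (MonoidWithZeroHom M K) :=
  TopologicalSpace.induced (fun f => (f : M → K)) Pi.topologicalSpace

namespace PointedCone

variable {𝕜 E : Type*} [Field 𝕜] [LinearOrder 𝕜] [IsStrictOrderedRing 𝕜]
  [AddCommGroup E] [Module 𝕜 E]

lemma dual_nonneg_of_mem_hull {s : Set E} {f : Module.Dual 𝕜 E} (hf : ∀ y ∈ s, 0 ≤ f y)
    {y : E} (hy : y ∈ hull 𝕜 s) : 0 ≤ f y :=
  (Submodule.span_le (p := (positive 𝕜 𝕜).comap f)).2 hf hy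

lemma hull_image {F : Type*} [AddCommGroup F] [Module 𝕜 F] (P : E →ₗ[𝕜] F) (s : Set E) :
    hull 𝕜 (P '' s) = (hull 𝕜 s).map P :=
  Submodule.span_image (P : E →ₗ[{c : 𝕜 // 0 ≤ c}] F)

/-- Farkas' lemma. -/
theorem exists_dual_of_notMem_hull (s : Finset E) {x : E} (hx : x ∉ hull 𝕜 (s : Set E)) :
    ∃ f : Module.Dual 𝕜 E, (∀ y ∈ s, 0 ≤ f y) ∧ f x < 0 := by
  classical
  obtain rfl | ⟨w, hw⟩ := s.eq_empty_or_nonempty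
  · have hx0 : x ≠ 0 := by rintro rfl; exact hx (zero_mem _)
    obtain ⟨f, hf⟩ := Module.Projective.exists_dual_eq_one 𝕜 hx0
    exact ⟨-f, by simp, by simp [hf]⟩
  have hsub : hull 𝕜 ((s.erase w : Finset E) : Set E) ≤ hull 𝕜 (s : Set E) :=
    Submodule.span_mono (Finset.coe_subset.2 (s.erase_subset w))
  obtain ⟨f, hf, hfx⟩ := exists_dual_of_notMem_hull (s.erase w) fun h => hx (hsub h)
  by_cases hfw : 0 ≤ f w
  · refine ⟨f, fun y hy => ?_, hfx⟩
    obtain rfl | hyw := eq_or_ne y w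
    · exact hfw
    · exact hf y (Finset.mem_erase.2 ⟨hyw, hy⟩)
  push Not at hfw
  let P : E →ₗ[𝕜] E := LinearMap.id - (f w)⁻¹ • f.smulRight w
  have hP : ∀ y, P y = y - (f y / f w) • w := fun y => by
    simp [P, div_eq_inv_mul, mul_smul]
  have hPx : P x ∉ hull 𝕜 (((s.erase w).image P : Finset E) : Set E) := by
    rw [Finset.coe_image, hull_image, mem_map]
    rintro ⟨z, hz, hPz⟩
    have hfz : 0 ≤ f z := dual_nonneg_of_mem_hull hf hz
    have hxz : x = ((f x - f z) / f w) • w + z := by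
      have : P z = P x := hPz
      rw [hP, hP] at this
      rw [sub_div, sub_smul]
      linear_combination (norm := module) -this
    have ht : 0 ≤ (f x - f z) / f w := div_nonneg_of_nonpos (by linarith) hfw.le
    exact hx (hxz ▸ add_mem ((hull 𝕜 _).smul_mem ht (subset_hull hw)) (hsub hz))
  obtain ⟨g, hg, hgx⟩ := exists_dual_of_notMem_hull ((s.erase w).image P) hPx
  refine ⟨g ∘ₗ P, fun y hy => ?_, hgx⟩
  obtain rfl | hyw := eq_or_ne y w
  · simp [hP, hfw.ne]
  · exact hg _ (Finset.mem_image_of_mem P (Finset.mem_erase.2 ⟨hyw, hy⟩))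
termination_by s.card
decreasing_by
  · classical exact Finset.card_erase_lt_of_mem hw
  · classical exact Finset.card_image_le.trans_lt (Finset.card_erase_lt_of_mem hw)

end PointedCone

namespace Submodule

variable {𝕜 ι : Type*} [Field 𝕜] [LinearOrder 𝕜] [IsStrictOrderedRing 𝕜] [Fintype ι]

/-- Stiemke's theorem of the alternative. -/
theorem exists_mem_dualAnnihilator_pos_at (V : Submodule 𝕜 (ι → 𝕜)) {i : ι}
    (hi : ∀ v ∈ V, v ≤ 0 → v i = 0) :
    ∃ f ∈ V.dualAnnihilator, (∀ v, 0 ≤ v → 0 ≤ f v) ∧ ∀ v, 0 ≤ v → 0 < v i → 0 < f v := by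
  classical
  obtain ⟨t, rfl⟩ : V.FG := IsNoetherian.noetherian V
  let e : ι → ι → 𝕜 := fun k => Pi.single k 1
  have he : ∀ k, 0 ≤ e k := fun k => Pi.single_nonneg.2 zero_le_one
  let s := t ∪ t.image Neg.neg ∪ Finset.univ.image e
  have hs : PointedCone.hull 𝕜 (s : Set (ι → 𝕜)) ≤
      PointedCone.ofSubmodule (span 𝕜 t) ⊔ PointedCone.positive 𝕜 (ι → 𝕜) := by
    refine span_le.2 fun y hy => ?_
    simp only [s, Finset.coe_union, Finset.coe_image, Set.mem_union, Set.mem_image,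
      Finset.mem_coe, Finset.coe_univ, Set.mem_univ, true_and] at hy
    rcases hy with (hy | ⟨y, hy, rfl⟩) | ⟨k, rfl⟩
    · exact mem_sup_left (subset_span hy)
    · exact mem_sup_left (show -y ∈ span 𝕜 t from neg_mem (subset_span hy))
    · exact mem_sup_right (he k)
  have hnot : -e i ∉ PointedCone.hull 𝕜 (s : Set (ι → 𝕜)) := by
    intro h
    obtain ⟨v, hv, p, hp, hvp⟩ := mem_sup.1 (hs h)
    have hp : 0 ≤ p := hp
    rw [← eq_sub_iff_add_eq] at hvp
    have hvi := hi v hv (hvp ▸ sub_nonpos.2 ((neg_nonpos.2 (he i)).trans hp))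
    have hpi : 0 ≤ p i := hp i
    simp [hvp, e] at hvi
    linarith
  obtain ⟨f, hf, hfi⟩ := PointedCone.exists_dual_of_notMem_hull s hnot
  have hfe : ∀ k, 0 ≤ f (e k) := fun k => hf _ (by simp [s])
  have hf0 : ∀ v, 0 ≤ v → 0 ≤ f v := fun v hv => by
    rw [← Finset.univ_sum_single v, map_sum]
    refine Finset.sum_nonneg fun k _ => ?_
    rw [← mul_one (v k), ← smul_eq_mul, Pi.single_smul, map_smul, smul_eq_mul]
    exact mul_nonneg (hv k) (hfe k)
  refine ⟨f, (mem_dualAnnihilator f).2 fun v hv => ?_, hf0, fun v hv hvi => ?_⟩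
  · refine (span_le (p := LinearMap.ker f)).2 (fun y hy => ?_) hv
    replace hy : y ∈ t := hy
    exact le_antisymm (by simpa using hf (-y) (by simp [s, hy])) (hf y (by simp [s, hy]))
  · have hrest : 0 ≤ v - v i • e i := fun k => by
      by_cases hk : k = i
      · simp [hk, e]
      · simpa [hk, e] using hv k
    have hfei : 0 < f (e i) := by simpa using hfi
    calc 0 < v i * f (e i) := mul_pos hvi hfei
      _ ≤ f (v - v i • e i) + v i * f (e i) := le_add_of_nonneg_left (hf0 _ hrest)
      _ = f v := by rw [map_sub, map_smul, smul_eq_mul, sub_add_cancel]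

theorem exists_mem_dualAnnihilator_pos (V : Submodule 𝕜 (ι → 𝕜)) :
    ∃ f ∈ V.dualAnnihilator, (∀ v, 0 ≤ v → 0 ≤ f v) ∧
      ∀ i, (∀ v ∈ V, v ≤ 0 → v i = 0) → ∀ v, 0 ≤ v → 0 < v i → 0 < f v := by
  classical
  choose! g hgV hg0 hgi using fun i (hi : ∀ v ∈ V, v ≤ 0 → v i = 0) =>
    V.exists_mem_dualAnnihilator_pos_at hi
  let I := Finset.univ.filter fun i => ∀ v ∈ V, v ≤ 0 → v i = 0
  refine ⟨∑ i ∈ I, g i, sum_mem fun i hi => hgV i (Finset.mem_filter.1 hi).2,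
    fun v hv => ?_, fun i hi v hv hvi => ?_⟩
  · rw [LinearMap.coe_sum, Finset.sum_apply]
    exact Finset.sum_nonneg fun j hj => hg0 j (Finset.mem_filter.1 hj).2 v hv
  · rw [LinearMap.coe_sum, Finset.sum_apply]
    exact Finset.sum_pos' (fun j hj => hg0 j (Finset.mem_filter.1 hj).2 v hv)
      ⟨i, Finset.mem_filter.2 ⟨Finset.mem_univ i, hi⟩, hgi i hi v hv hvi⟩

end Submodule

theorem AddSubgroup.exists_nsmul_mem_of_mem_span_rat {E : Type*} [AddCommGroup E] [Module ℚ E]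
    (L : AddSubgroup E) {y : E} (hy : y ∈ Submodule.span ℚ (L : Set E)) :
    ∃ n : ℕ, 0 < n ∧ n • y ∈ L := by
  induction hy using Submodule.span_induction with
  | mem x hx => exact ⟨1, one_pos, by simpa using hx⟩
  | zero => exact ⟨1, one_pos, by simp⟩
  | add x y _ _ hx hy =>
    obtain ⟨m, hm, hmx⟩ := hx
    obtain ⟨n, hn, hny⟩ := hy
    refine ⟨m * n, mul_pos hm hn, ?_⟩
    rw [smul_add, mul_comm, mul_smul, mul_comm, mul_smul]
    exact add_mem (L.nsmul_mem hmx n) (L.nsmul_mem hny m)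
  | smul q x _ hx =>
    obtain ⟨n, hn, hnx⟩ := hx
    refine ⟨q.den * n, mul_pos q.den_pos hn, ?_⟩
    have : (q.den * n) • q • x = q.num • n • x := by
      rw [← Nat.cast_smul_eq_nsmul ℚ, ← Nat.cast_smul_eq_nsmul ℚ n, ← Int.cast_smul_eq_zsmul ℚ,
        smul_smul, smul_smul, Nat.cast_mul, mul_right_comm, Rat.den_mul_eq_num]
    rw [this]
    exact L.zsmul_mem hnx q.num

namespace Binoid

variable {M : Type*} [CommMonoidWithZero M]

structure IsPositiveGrading (δ : M → ℚ) : Prop where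
  nonneg (m : M) : 0 ≤ δ m
  map_mul {m n : M} : m ≠ 0 → n ≠ 0 → δ (m * n) = δ m + δ n
  map_isUnit {u : M} : IsUnit u → δ u = 0
  pos {m : M} : m ≠ 0 → ¬IsUnit m → 0 < δ m

section Monomial

variable {ι : Type*} [Fintype ι]

def monomial (g : ι → M) (a : ι → ℕ) : M := ∏ i, g i ^ a i

lemma monomial_add (g : ι → M) (a b : ι → ℕ) :
    monomial g (a + b) = monomial g a * monomial g b := by
  simp only [monomial, Pi.add_apply, pow_add, Finset.prod_mul_distrib]

lemma monomial_zero (g : ι → M) : monomial g 0 = 1 := by simp [monomial]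

lemma dvd_monomial (g : ι → M) {a : ι → ℕ} {i : ι} (hi : a i ≠ 0) : g i ∣ monomial g a :=
  (dvd_pow_self _ hi).trans (Finset.dvd_prod_of_mem _ (Finset.mem_univ i))

lemma isUnit_monomial (g : ι → M) {a : ι → ℕ} (h : ∀ i, a i ≠ 0 → IsUnit (g i)) :
    IsUnit (monomial g a) :=
  IsUnit.prod_univ_iff.2 fun i => (eq_or_ne (a i) 0).elim (fun hi => by simp [hi])
    fun hi => (h i hi).pow _

variable [NoZeroDivisors M] [Nontrivial M]

def relations (g : ι → M) : AddSubgroup (ι → ℚ) where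
  carrier := {v | ∃ a b, monomial g a = monomial g b ∧ monomial g a ≠ 0 ∧
    v = fun i => (a i - b i : ℚ)}
  zero_mem' := ⟨0, 0, rfl, by simp [monomial_zero], by ext; simp⟩
  add_mem' := by
    rintro _ _ ⟨a, b, hab, ha, rfl⟩ ⟨a', b', hab', ha', rfl⟩
    refine ⟨a + a', b + b', by rw [monomial_add, monomial_add, hab, hab'], ?_, ?_⟩
    · rw [monomial_add]
      exact mul_ne_zero ha ha'
    · ext i
      simp only [Pi.add_apply, Nat.cast_add]
      ring
  neg_mem' := by
    rintro _ ⟨a, b, hab, ha, rfl⟩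
    exact ⟨b, a, hab.symm, hab ▸ ha, by ext; simp⟩

variable {g : ι → M}

lemma apply_eq_zero_of_mem_relations (hsep : ∀ x y : M, x = x * y → x = 0 ∨ y = 1)
    {v : ι → ℚ} (hv : v ∈ relations g) (hle : v ≤ 0) {i : ι} (hi : ¬IsUnit (g i)) :
    v i = 0 := by
  obtain ⟨a, b, hab, ha, rfl⟩ := hv
  have hab' : a ≤ b := fun k => by
    have h := hle k
    simp only [Pi.zero_apply, sub_nonpos] at h
    exact_mod_cast h
  obtain ⟨c, rfl⟩ : ∃ c, b = a + c :=
    ⟨b - a, funext fun k => (Nat.add_sub_cancel' (hab' k)).symm⟩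
  rw [monomial_add] at hab
  have hc : monomial g c = 1 := (hsep _ _ hab).resolve_left ha
  by_contra h
  exact hi (isUnit_of_dvd_one (hc ▸ dvd_monomial g (a := c) (by simpa using h)))

lemma apply_eq_zero_of_mem_span_relations (hsep : ∀ x y : M, x = x * y → x = 0 ∨ y = 1)
    {v : ι → ℚ} (hv : v ∈ Submodule.span ℚ (relations g : Set (ι → ℚ))) (hle : v ≤ 0) {i : ι}
    (hi : ¬IsUnit (g i)) : v i = 0 := by
  obtain ⟨n, hn, hnv⟩ := (relations g).exists_nsmul_mem_of_mem_span_rat hv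
  simpa [hn.ne'] using apply_eq_zero_of_mem_relations hsep hnv (nsmul_nonpos hle n) hi

theorem exists_isPositiveGrading_of_surjective (hsep : ∀ x y : M, x = x * y → x = 0 ∨ y = 1)
    (hg : Function.Surjective (monomial g)) : ∃ δ : M → ℚ, IsPositiveGrading δ := by
  obtain ⟨f, hfV, hf0, hfpos⟩ :=
    (Submodule.span ℚ (relations g : Set (ι → ℚ))).exists_mem_dualAnnihilator_pos
  let cast : (ι → ℕ) →+ ι → ℚ := (Nat.castAddMonoidHom ℚ).compLeft ι
  let w : (ι → ℕ) →+ ℚ := f.toAddMonoidHom.comp cast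
  have hw : ∀ a b, monomial g a = monomial g b → monomial g a ≠ 0 → w a = w b :=
    fun a b hab ha => by
      have h : f (cast a - cast b) = 0 :=
        (Submodule.mem_dualAnnihilator f).1 hfV _ (Submodule.subset_span ⟨a, b, hab, ha, rfl⟩)
      rwa [map_sub, sub_eq_zero] at h
  let δ : M → ℚ := fun m => w (Function.surjInv hg m)
  have hδ : ∀ a, monomial g a ≠ 0 → δ (monomial g a) = w a := fun a ha => by
    have h := Function.surjInv_eq hg (monomial g a)
    exact hw _ _ h (by rwa [h])
  have hδ_nonneg : ∀ m, 0 ≤ δ m := fun m => hf0 _ fun i => Nat.cast_nonneg _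
  have hδ_mul : ∀ {m n : M}, m ≠ 0 → n ≠ 0 → δ (m * n) = δ m + δ n := fun {m n} hm hn => by
    obtain ⟨a, rfl⟩ := hg m
    obtain ⟨b, rfl⟩ := hg n
    rw [← monomial_add, hδ _ (monomial_add g a b ▸ mul_ne_zero hm hn), hδ a hm, hδ b hn, map_add]
  refine ⟨δ, hδ_nonneg, hδ_mul, fun {u} hu => ?_, fun {m} hm hu => ?_⟩
  · obtain ⟨v, huv⟩ := hu.exists_right_inv
    have h := hδ_mul hu.ne_zero (right_ne_zero_of_mul_eq_one huv)
    rw [huv, ← monomial_zero g, hδ 0 (monomial_zero g ▸ one_ne_zero), map_zero] at h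
    linarith [hδ_nonneg u, hδ_nonneg v]
  · obtain ⟨a, rfl⟩ := hg m
    obtain ⟨i, hai, hi⟩ : ∃ i, a i ≠ 0 ∧ ¬IsUnit (g i) := by
      by_contra! h
      exact hu (isUnit_monomial g h)
    rw [hδ a hm]
    exact hfpos i (fun v hv hle => apply_eq_zero_of_mem_span_relations hsep hv hle hi) _
      (fun k => Nat.cast_nonneg _) (Nat.cast_pos.2 (Nat.pos_of_ne_zero hai))

end Monomial

theorem exists_isPositiveGrading [Monoid.FG M] [NoZeroDivisors M]
    (hsep : ∀ x y : M, x = x * y → x = 0 ∨ y = 1) : ∃ δ : M → ℚ, IsPositiveGrading δ := by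
  rcases subsingleton_or_nontrivial M with _ | _
  · exact ⟨0, fun _ => le_rfl, fun _ _ => by simp, fun _ => rfl,
      fun hm => absurd (Subsingleton.elim _ _) hm⟩
  obtain ⟨S, hS⟩ := Monoid.FG.fg_top (M := M)
  refine exists_isPositiveGrading_of_surjective (g := ((↑) : S → M)) hsep fun m => ?_
  obtain ⟨a, rfl⟩ := Submonoid.mem_closure_finset'.1 (hS ▸ Submonoid.mem_top m)
  exact ⟨a, rfl⟩

namespace IsPositiveGrading

variable {K : Type*} [RCLike K] {δ : M → ℚ} (hδ : IsPositiveGrading δ)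

noncomputable def scale (p : M →*₀ K) (t : unitInterval) : M →*₀ K where
  toFun m := p m * (((t : ℝ) ^ (δ m : ℝ) : ℝ) : K)
  map_zero' := by simp
  map_one' := by simp [hδ.map_isUnit isUnit_one]
  map_mul' m n := by
    by_cases hm : m = 0
    · simp [hm]
    by_cases hn : n = 0
    · simp [hn]
    have hδm : (0 : ℝ) ≤ δ m := by exact_mod_cast hδ.nonneg m
    have hδn : (0 : ℝ) ≤ δ n := by exact_mod_cast hδ.nonneg n
    rw [_root_.map_mul, hδ.map_mul hm hn, Rat.cast_add, Real.rpow_add_of_nonneg t.2.1 hδm hδn]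
    push_cast
    ring

@[simp]
lemma scale_apply (p : M →*₀ K) (t : unitInterval) (m : M) :
    hδ.scale p t m = p m * (((t : ℝ) ^ (δ m : ℝ) : ℝ) : K) := rfl

lemma continuous_scale : Continuous fun x : (M →*₀ K) × unitInterval => hδ.scale x.1 x.2 := by
  refine continuous_induced_rng.2 (continuous_pi fun m => ?_)
  have hp : Continuous fun p : M →*₀ K => p m := (continuous_apply m).comp continuous_induced_dom
  have ht : Continuous fun t : ℝ => t ^ (δ m : ℝ) :=
    Real.continuous_rpow_const (by exact_mod_cast hδ.nonneg m)
  exact (hp.comp continuous_fst).mul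
    (RCLike.continuous_ofReal.comp (ht.comp (continuous_subtype_val.comp continuous_snd)))

lemma scale_one (p : M →*₀ K) : hδ.scale p 1 = p := by
  ext m
  simp

lemma scale_zero_apply (p : M →*₀ K) {m : M} (hm : ¬IsUnit m) : hδ.scale p 0 m = 0 := by
  by_cases h0 : m = 0
  · simp [h0]
  · have hδm : (δ m : ℝ) ≠ 0 := by exact_mod_cast (hδ.pos h0 hm).ne'
    simp [Real.zero_rpow hδm]

lemma scale_zero (p : M →*₀ K) (hp : ∀ m, ¬IsUnit m → p m = 0) : hδ.scale p 0 = p := by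
  ext m
  by_cases hm : IsUnit m
  · simp [hδ.map_isUnit hm]
  · simp [hp m hm]

end IsPositiveGrading

end Binoid

def ContinuousMap.HomotopyEquiv.ofDeformationRetract {X : Type*} [TopologicalSpace X]
    {P : X → Prop} (F : C(X × unitInterval, X)) (h1 : ∀ x, F (x, 1) = x)
    (h0 : ∀ x, P (F (x, 0))) (hP : ∀ x, P x → F (x, 0) = x) :
    ContinuousMap.HomotopyEquiv {x // P x} X where
  toFun := ⟨Subtype.val, continuous_subtype_val⟩
  invFun := ⟨fun x => ⟨F (x, 0), h0 x⟩, by fun_prop⟩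
  left_inv := by
    convert ContinuousMap.Homotopic.refl (ContinuousMap.id {x // P x})
    ext a
    exact hP a a.2
  right_inv := ⟨{ toFun := fun x => F (x.2, x.1)
                  continuous_toFun := by fun_prop
                  map_zero_left := fun _ => rfl
                  map_one_left := h1 }⟩

/-- Let `K` be `ℝ` or `ℂ` and `M` a finitely generated, integral, separated
commutative binoid. Let `X = MonoidWithZeroHom M K` with the pointwise-convergence topology
and `A ⊆ X` the subspace of homomorphisms vanishing on all non-units. Then `A` is a
deformation retract of `X`: there is a continuous `F : X × [0,1] → X` with `F (p, 1) = p`,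
`F (p, 0) ∈ A`, and `F (p, 0) = p` for `p ∈ A`; in particular the inclusion `A ↪ X` is a
homotopy equivalence. -/
theorem kspec_deformation_retract_units {K M : Type*} [RCLike K] [CommMonoidWithZero M]
    (hfg : ∃ S : Finset M, Submonoid.closure (S : Set M) = ⊤)
    (hint : ∀ x y : M, x * y = 0 → x = 0 ∨ y = 0)
    (hsep : ∀ x y : M, x = x * y → x = 0 ∨ y = 1) :
    ∃ F : MonoidWithZeroHom M K × unitInterval → MonoidWithZeroHom M K,
      Continuous F ∧
      (∀ p : MonoidWithZeroHom M K, F (p, 1) = p) ∧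
      (∀ p : MonoidWithZeroHom M K, ∀ m : M, ¬ IsUnit m → F (p, 0) m = 0) ∧
      (∀ p : MonoidWithZeroHom M K, (∀ m : M, ¬ IsUnit m → p m = 0) → F (p, 0) = p) ∧
      ∃ h : ContinuousMap.HomotopyEquiv
          {p : MonoidWithZeroHom M K // ∀ m : M, ¬ IsUnit m → p m = 0}
          (MonoidWithZeroHom M K),
        ∀ p : {p : MonoidWithZeroHom M K // ∀ m : M, ¬ IsUnit m → p m = 0},
          h.toFun p = p.val := by
  have : Monoid.FG M := ⟨hfg⟩
  have : NoZeroDivisors M := ⟨fun h => hint _ _ h⟩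
  obtain ⟨δ, hδ⟩ := Binoid.exists_isPositiveGrading hsep
  let F : C((M →*₀ K) × unitInterval, M →*₀ K) :=
    ⟨fun x => hδ.scale x.1 x.2, hδ.continuous_scale⟩
  have hF0 : ∀ p m, ¬IsUnit m → F (p, 0) m = 0 := fun p _ hm => hδ.scale_zero_apply p hm
  refine ⟨F, F.continuous, hδ.scale_one, hF0, hδ.scale_zero,
    .ofDeformationRetract F hδ.scale_one hF0 hδ.scale_zero, fun _ => rfl⟩
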